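/- Let L > 0 and let u be a classical solution of the projected sinh-Gordon equation (C², L-periodic in x, with zero spatial mean). Then the momentum F(t) = ∫₀^L u_x(x,t)·u_t(x,t) dx is independent of t, i.e. F(t) = F(0) for all t ≥ 0. -/

import Mathlib

/-!
Write `c(t) = (1/L) ∫₀^L sinh u(y,t) dy`, so that `u_tt = u_xx + sinh u - c`. Then the time
derivative of the momentum density is a pure `x`-derivative,
`∂ₜ(uₓ uₜ) = ∂ₓ(uₜ²/2 + uₓ²/2 + cosh u - c u)`,
using `uₓₜ = uₜₓ`. Differentiating under the integral sign, `F'(t)` is the integral over a period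
of the `x`-derivative of an `L`-periodic function, hence zero for `t ≥ 0`.
-/

open Real MeasureTheory Function

section PartialDerivatives

variable {E : Type*} [NormedAddCommGroup E] [NormedSpace ℝ E]

noncomputable def partialFst (u : ℝ → ℝ → E) (x t : ℝ) : E := deriv (fun y => u y t) x

noncomputable def partialSnd (u : ℝ → ℝ → E) (x t : ℝ) : E := deriv (fun s => u x s) t

variable {u : ℝ → ℝ → E}

theorem hasDerivAt_fderiv_apply_fst {x t : ℝ} (hu : DifferentiableAt ℝ (uncurry u) (x, t)) :
    HasDerivAt (fun y => u y t) (fderiv ℝ (uncurry u) (x, t) (1, 0)) x :=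
  hu.hasFDerivAt.comp_hasDerivAt (f := fun y => (y, t)) x
    ((hasDerivAt_id x).prodMk (hasDerivAt_const x t))

theorem hasDerivAt_fderiv_apply_snd {x t : ℝ} (hu : DifferentiableAt ℝ (uncurry u) (x, t)) :
    HasDerivAt (fun s => u x s) (fderiv ℝ (uncurry u) (x, t) (0, 1)) t :=
  hu.hasFDerivAt.comp_hasDerivAt (f := fun s => (x, s)) t
    ((hasDerivAt_const t x).prodMk (hasDerivAt_id t))

theorem partialFst_eq_fderiv (hu : Differentiable ℝ (uncurry u)) :
    partialFst u = fun x t => fderiv ℝ (uncurry u) (x, t) (1, 0) := by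
  ext x t
  exact (hasDerivAt_fderiv_apply_fst (hu (x, t))).deriv

theorem partialSnd_eq_fderiv (hu : Differentiable ℝ (uncurry u)) :
    partialSnd u = fun x t => fderiv ℝ (uncurry u) (x, t) (0, 1) := by
  ext x t
  exact (hasDerivAt_fderiv_apply_snd (hu (x, t))).deriv

theorem hasDerivAt_partialFst {x t : ℝ} (hu : Differentiable ℝ (uncurry u)) :
    HasDerivAt (fun y => u y t) (partialFst u x t) x := by
  rw [partialFst_eq_fderiv hu]
  exact hasDerivAt_fderiv_apply_fst (hu (x, t))

theorem hasDerivAt_partialSnd {x t : ℝ} (hu : Differentiable ℝ (uncurry u)) :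
    HasDerivAt (fun s => u x s) (partialSnd u x t) t := by
  rw [partialSnd_eq_fderiv hu]
  exact hasDerivAt_fderiv_apply_snd (hu (x, t))

theorem contDiff_partialFst {n : WithTop ℕ∞} (hu : ContDiff ℝ (n + 1) (uncurry u)) :
    ContDiff ℝ n (uncurry (partialFst u)) := by
  rw [partialFst_eq_fderiv (hu.differentiable (by simp))]
  exact (hu.fderiv_right le_rfl).clm_apply contDiff_const

theorem contDiff_partialSnd {n : WithTop ℕ∞} (hu : ContDiff ℝ (n + 1) (uncurry u)) :
    ContDiff ℝ n (uncurry (partialSnd u)) := by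
  rw [partialSnd_eq_fderiv (hu.differentiable (by simp))]
  exact (hu.fderiv_right le_rfl).clm_apply contDiff_const

theorem partialSnd_partialFst (hu : ContDiff ℝ 2 (uncurry u)) :
    partialSnd (partialFst u) = partialFst (partialSnd u) := by
  have hdiff : Differentiable ℝ (uncurry u) := hu.differentiable (by simp)
  have hdiff' : Differentiable ℝ (fderiv ℝ (uncurry u)) :=
    (hu.fderiv_right (m := 1) (by norm_num)).differentiable (by simp)
  have hslice (v : ℝ × ℝ) :
      (uncurry fun x t => fderiv ℝ (uncurry u) (x, t) v) = fun p => fderiv ℝ (uncurry u) p v :=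
    rfl
  have hdiff_slice (v : ℝ × ℝ) :
      Differentiable ℝ (uncurry fun x t => fderiv ℝ (uncurry u) (x, t) v) :=
    hdiff'.clm_apply (differentiable_const v)
  rw [partialFst_eq_fderiv hdiff, partialSnd_eq_fderiv hdiff,
    partialSnd_eq_fderiv (hdiff_slice _), partialFst_eq_fderiv (hdiff_slice _)]
  ext x t
  simp only [hslice, fderiv_clm_apply (hdiff' _) (differentiableAt_const _)]
  simpa using hu.contDiffAt.isSymmSndFDerivAt (by simp) (0, 1) (1, 0)

theorem Function.Periodic.deriv {f : ℝ → E} {c : ℝ} (hf : Periodic f c) :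
    Periodic (deriv f) c := by
  intro x
  rw [← deriv_comp_add_const, hf.funext]

theorem hasDerivAt_intervalIntegral_of_continuous_partial {f f' : ℝ → ℝ → E}
    (hf : Continuous (uncurry f)) (hf' : Continuous (uncurry f'))
    (hderiv : ∀ x s, HasDerivAt (f x) (f' x s) s) (a b t : ℝ) :
    HasDerivAt (fun s => ∫ x in a..b, f x s) (∫ x in a..b, f' x t) t := by
  obtain ⟨C, hC⟩ := (isCompact_uIcc.prod (isCompact_closedBall t 1)).exists_bound_of_continuousOn
    hf'.continuousOn
  refine (intervalIntegral.hasDerivAt_integral_of_dominated_loc_of_deriv_le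
    (F := fun s x => f x s) (F' := fun s x => f' x s) (bound := fun _ => C)
    (Metric.closedBall_mem_nhds t one_pos)
    (.of_forall fun s => (hf.uncurry_right s).aestronglyMeasurable)
    ((hf.uncurry_right t).intervalIntegrable a b) (hf'.uncurry_right t).aestronglyMeasurable
    (.of_forall fun x hx s hs => hC (x, s) ⟨Set.uIoc_subset_uIcc hx, hs⟩)
    intervalIntegrable_const (.of_forall fun x _ s _ => hderiv x s)).2

end PartialDerivatives

section Momentum

variable {u : ℝ → ℝ → ℝ}

noncomputable def momentumDensity (u : ℝ → ℝ → ℝ) (x t : ℝ) : ℝ :=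
  partialFst u x t * partialSnd u x t

noncomputable def momentumFlux (u : ℝ → ℝ → ℝ) (c x t : ℝ) : ℝ :=
  partialSnd u x t ^ 2 / 2 + partialFst u x t ^ 2 / 2 + cosh (u x t) - c * u x t

theorem contDiff_momentumDensity (hu : ContDiff ℝ 2 (uncurry u)) :
    ContDiff ℝ 1 (uncurry (momentumDensity u)) :=
  (contDiff_partialFst hu).mul (contDiff_partialSnd hu)

theorem partialSnd_momentumDensity (hu : ContDiff ℝ 2 (uncurry u)) (x t : ℝ) :
    partialSnd (momentumDensity u) x t = partialSnd (partialFst u) x t * partialSnd u x t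
      + partialFst u x t * partialSnd (partialSnd u) x t :=
  ((hasDerivAt_partialSnd ((contDiff_partialFst hu).differentiable one_ne_zero)).mul
    (hasDerivAt_partialSnd ((contDiff_partialSnd hu).differentiable one_ne_zero))).deriv

theorem hasDerivAt_momentumFlux (hu : ContDiff ℝ 2 (uncurry u)) {c x t : ℝ}
    (hwave : partialSnd (partialSnd u) x t = partialFst (partialFst u) x t + sinh (u x t) - c) :
    HasDerivAt (fun y => momentumFlux u c y t) (partialSnd (momentumDensity u) x t) x := by
  have hu' : Differentiable ℝ (uncurry u) := hu.differentiable (by simp)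
  have hux : HasDerivAt (fun y => partialFst u y t) (partialFst (partialFst u) x t) x :=
    hasDerivAt_partialFst ((contDiff_partialFst (n := 1) hu).differentiable one_ne_zero)
  have hut : HasDerivAt (fun y => partialSnd u y t) (partialFst (partialSnd u) x t) x :=
    hasDerivAt_partialFst ((contDiff_partialSnd (n := 1) hu).differentiable one_ne_zero)
  have hu_x : HasDerivAt (fun y => u y t) (partialFst u x t) x := hasDerivAt_partialFst hu'
  refine ((((hut.pow 2).div_const 2).add ((hux.pow 2).div_const 2)).add hu_x.cosh).sub
    (hu_x.const_mul c) |>.congr_deriv ?_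
  rw [partialSnd_momentumDensity hu, hwave, partialSnd_partialFst hu]
  ring

theorem momentumFlux_periodic {L : ℝ} (hper : ∀ t, Periodic (fun x => u x t) L) (c t : ℝ) :
    Periodic (fun x => momentumFlux u c x t) L := by
  have hux : Periodic (fun x => partialFst u x t) L := (hper t).deriv
  have hut : Periodic (fun x => partialSnd u x t) L := fun x => by
    simp only [partialSnd, fun s => hper s x]
  intro x
  simp only [momentumFlux, hux x, hut x, hper t x]

end Momentum

theorem sinhGordon_momentum_conservation
    (L : ℝ)
    (u : ℝ → ℝ → ℝ)
    (hreg : ContDiff ℝ 2 (Function.uncurry u))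
    (hper : ∀ x t : ℝ, u (x + L) t = u x t)
    (hpde : ∀ x t : ℝ, 0 ≤ t →
      deriv (deriv (fun s => u x s)) t
        - deriv (deriv (fun y => u y t)) x
        - Real.sinh (u x t)
        + (1 / L) * ∫ y in (0:ℝ)..L, Real.sinh (u y t) = 0) :
    ∀ t : ℝ, 0 ≤ t →
      (∫ x in (0:ℝ)..L, deriv (fun y => u y t) x * deriv (fun s => u x s) t)
      = ∫ x in (0:ℝ)..L, deriv (fun y => u y 0) x * deriv (fun s => u x s) 0 := by
  set c : ℝ → ℝ := fun t => (1 / L) * ∫ y in (0:ℝ)..L, Real.sinh (u y t)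
  have hwave (x t : ℝ) (ht : 0 ≤ t) :
      partialSnd (partialSnd u) x t = partialFst (partialFst u) x t + sinh (u x t) - c t := by
    have h := hpde x t ht
    unfold partialSnd partialFst
    linarith
  have hp := contDiff_momentumDensity hreg
  have hp' := contDiff_partialSnd (n := 0) hp
  have hmomentum (t : ℝ) := hasDerivAt_intervalIntegral_of_continuous_partial hp.continuous
    hp'.continuous (fun _ _ => hasDerivAt_partialSnd (hp.differentiable one_ne_zero)) 0 L t
  have hrate_zero (t : ℝ) (ht : 0 ≤ t) :
      ∫ x in (0:ℝ)..L, partialSnd (momentumDensity u) x t = 0 := by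
    rw [intervalIntegral.integral_eq_sub_of_hasDerivAt
      (fun x _ => hasDerivAt_momentumFlux hreg (hwave x t ht))
      ((hp'.continuous.uncurry_right t).intervalIntegrable 0 L)]
    simpa using sub_eq_zero.2 (momentumFlux_periodic (fun t x => hper x t) (c t) t 0)
  intro t ht
  show ∫ x in (0:ℝ)..L, momentumDensity u x t = ∫ x in (0:ℝ)..L, momentumDensity u x 0
  exact constant_of_has_deriv_right_zero (fun s _ => (hmomentum s).continuousAt.continuousWithinAt)
    (fun s hs => (hmomentum s).hasDerivWithinAt.congr_deriv (hrate_zero s hs.1)) t ⟨ht, le_rfl⟩
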